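/- arXiv:1402.5314 — 3 statements merged into one kernel-verified Lean document; each statement's English description precedes it below -/
import Mathlib

section
/- Let n ≥ 2 and r ≥ 2. Then the palindromic width of the group Ñ_{n,r} with respect to its generating family Y = (y_1, …, y_n) satisfies n ≤ pw(Ñ_{n,r}, Y) ≤ 2n. -/
/-- The element of `G` represented by a word in the alphabet `X^{±1}`:
a letter `(i, true)` stands for `X i` and `(i, false)` for `(X i)⁻¹`. -/
def evalWord {G : Type*} {n : ℕ} [Group G] (X : Fin n → G) (w : List (Fin n × Bool)) : G :=
  (w.map fun l => if l.2 then X l.1 else (X l.1)⁻¹).prod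

/-- `g` is a palindrome with respect to the generating family `X` if it is represented by
some word whose sequence of letters equals its reverse. -/
def IsPalindrome {G : Type*} {n : ℕ} [Group G] (X : Fin n → G) (g : G) : Prop :=
  ∃ w : List (Fin n × Bool), w.reverse = w ∧ evalWord X w = g

/-- `g` is a product of `k` palindromes with respect to `X`. -/
def IsPalProd {G : Type*} {n : ℕ} [Group G] (X : Fin n → G) (k : ℕ) (g : G) : Prop :=
  ∃ f : Fin k → G, (∀ i, IsPalindrome X (f i)) ∧ (List.ofFn f).prod = g

/-- The palindromic length of `g` with respect to `X`, valued in `ℕ∞`. -/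
noncomputable def palLength {G : Type*} {n : ℕ} [Group G] (X : Fin n → G) (g : G) : ℕ∞ :=
  sInf {k : ℕ∞ | ∃ m : ℕ, k = (m : ℕ∞) ∧ IsPalProd X m g}

/-- The palindromic width of `G` with respect to `X`, valued in `ℕ∞`. -/
noncomputable def palWidth {G : Type*} {n : ℕ} [Group G] (X : Fin n → G) : ℕ∞ :=
  ⨆ g : G, palLength X g

/-- The free nilpotent group `N_{n,r}` of rank `n` and step `r`: the quotient of the free
group on `n` generators by `γ_{r+1} = lowerCentralSeries _ r` (indices: `γ_1` is the
whole group and corresponds to index `0`). -/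
abbrev FreeNilpotent (n r : ℕ) :=
  FreeGroup (Fin n) ⧸ (⊤ : Subgroup (FreeGroup (Fin n))).lowerCentralSeries r

/-- The images `x_1, …, x_n` of the free basis in `N_{n,r}`. -/
def nilGen (n r : ℕ) (i : Fin n) : FreeNilpotent n r :=
  QuotientGroup.mk (FreeGroup.of i)

/-- `Ñ_{n,r}`: the quotient of `N_{n,r}` by the normal closure of the squares of the
generators. -/
abbrev TildeNil (n r : ℕ) :=
  FreeNilpotent n r ⧸ Subgroup.normalClosure (Set.range fun i : Fin n => nilGen n r i ^ 2)

/-- The generating family `y_1, …, y_n` of `Ñ_{n,r}`. -/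
def tnGen (n r : ℕ) (i : Fin n) : TildeNil n r := QuotientGroup.mk (nilGen n r i)

/-!
In a nilpotent group generated by `x₁, …, xₙ` every element can be written as
`∏ᵢ xᵢ ^ kᵢ * ⁅xᵢ, uᵢ⁆`. Writing `γ c` for `(⊤ : Subgroup G).lowerCentralSeries c`: modulo
`γ 1` this is the abelianization, and an error term in `γ (d + 1)` is, modulo `γ (d + 2)`, a
central product `∏ᵢ ⁅xᵢ, vᵢ⁆` with `vᵢ ∈ γ d`, which is absorbed by replacing `uᵢ` with
`uᵢ * vᵢ`. When the generators are involutions, reversing a word inverts it,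
so conjugates of palindromes are palindromes and each factor
`xᵢ ^ k * ⁅xᵢ, u⁆ = xᵢ ^ (k + 1) * (u * xᵢ⁻¹ * u⁻¹)` is a product of two palindromes.

Conversely, `yᵢ ↦ eᵢ` defines `Ñ_{n,r} → (ℤ/2)ⁿ`, under which the letters of a palindrome
cancel in pairs around the middle one. So each palindrome maps to a vector of Hamming weight at
most one, while `y₁ ⋯ yₙ` maps to `(1, …, 1)`.
-/

open Subgroup
open scoped commutatorElement IsMulCommutative

section Words

variable {G : Type*} [Group G] {n : ℕ} (X : Fin n → G)

theorem evalWord_append (w₁ w₂ : List (Fin n × Bool)) :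
    evalWord X (w₁ ++ w₂) = evalWord X w₁ * evalWord X w₂ := by
  simp [evalWord]

theorem exists_evalWord_eq (hX : closure (Set.range X) = ⊤) (g : G) :
    ∃ w, evalWord X w = g := by
  obtain ⟨a, rfl⟩ : ∃ a, FreeGroup.lift X a = g := by
    rw [← MonoidHom.mem_range, FreeGroup.range_lift_eq_closure, hX]
    exact mem_top g
  refine ⟨a.toWord, ?_⟩
  conv_rhs => rw [← FreeGroup.mk_toWord (x := a)]
  simp [evalWord, FreeGroup.lift_mk, Bool.cond_eq_ite]

theorem evalWord_reverse (hX : ∀ i, X i ^ 2 = 1) (w : List (Fin n × Bool)) :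
    evalWord X w.reverse = (evalWord X w)⁻¹ := by
  have hinv : ∀ i, (X i)⁻¹ = X i := fun i => inv_eq_of_mul_eq_one_right (by rw [← sq, hX])
  induction w with
  | nil => simp [evalWord]
  | cons l w ih =>
    rw [List.reverse_cons, evalWord_append, ih]
    simp [evalWord, hinv]

theorem isPalindrome_zpow (i : Fin n) (k : ℤ) : IsPalindrome X (X i ^ k) := by
  obtain ⟨m, rfl | rfl⟩ := Int.eq_nat_or_neg k
  · exact ⟨List.replicate m (i, true), List.reverse_replicate .., by simp [evalWord]⟩
  · exact ⟨List.replicate m (i, false), List.reverse_replicate .., by simp [evalWord]⟩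

theorem IsPalindrome.conj (hX : ∀ i, X i ^ 2 = 1) (hgen : closure (Set.range X) = ⊤) {p : G}
    (hp : IsPalindrome X p) (u : G) : IsPalindrome X (u * p * u⁻¹) := by
  obtain ⟨v, hv, rfl⟩ := hp
  obtain ⟨w, rfl⟩ := exists_evalWord_eq X hgen u
  refine ⟨w ++ v ++ w.reverse, by simp [hv], ?_⟩
  rw [evalWord_append, evalWord_append, evalWord_reverse X hX]

theorem isPalProd_iff {k : ℕ} {g : G} :
    IsPalProd X k g ↔ ∃ l : List G, l.length = k ∧ (∀ p ∈ l, IsPalindrome X p) ∧ l.prod = g := by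
  constructor
  · rintro ⟨f, hf, rfl⟩
    exact ⟨List.ofFn f, List.length_ofFn, by simpa [List.mem_ofFn'] using hf, rfl⟩
  · rintro ⟨l, rfl, hl, rfl⟩
    exact ⟨fun i => l[i], fun i => hl _ (List.getElem_mem _), by simp⟩

theorem isPalProd_list_prod {k : ℕ} (l : List G) (hl : ∀ g ∈ l, IsPalProd X k g) :
    IsPalProd X (k * l.length) l.prod := by
  induction l with
  | nil => exact (isPalProd_iff X).2 ⟨[], rfl, by simp, rfl⟩
  | cons g l ih =>
    obtain ⟨a, ha, hap, rfl⟩ := (isPalProd_iff X).1 (hl g List.mem_cons_self)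
    obtain ⟨b, hb, hbp, hbprod⟩ :=
      (isPalProd_iff X).1 (ih fun h hh => hl h (List.mem_cons_of_mem _ hh))
    refine (isPalProd_iff X).2 ⟨a ++ b, ?_, ?_, ?_⟩
    · simp [ha, hb, mul_add, add_comm]
    · simpa [or_imp, forall_and] using ⟨hap, hbp⟩
    · rw [List.prod_append, hbprod, List.prod_cons]

theorem palLength_le {m : ℕ} {g : G} (h : IsPalProd X m g) : palLength X g ≤ m :=
  sInf_le ⟨m, rfl, h⟩

theorem le_palLength {k : ℕ} {g : G} (h : ∀ m, IsPalProd X m g → k ≤ m) :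
    (k : ℕ∞) ≤ palLength X g :=
  le_sInf <| by rintro _ ⟨m, rfl, hm⟩; exact_mod_cast h m hm

theorem palWidth_le {m : ℕ} (h : ∀ g, IsPalProd X m g) : palWidth X ≤ m :=
  iSup_le fun g => palLength_le X (h g)

theorem le_palWidth {k : ℕ} (g : G) (h : ∀ m, IsPalProd X m g → k ≤ m) :
    (k : ℕ∞) ≤ palWidth X :=
  (le_palLength X h).trans (le_iSup (palLength X) g)

end Words

theorem List.Palindrome.prod_map_eq_one_or {α A : Type*} [CommGroup A] (hA : ∀ a : A, a ^ 2 = 1)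
    {l : List α} (hl : l.Palindrome) (f : α → A) :
    (l.map f).prod = 1 ∨ ∃ a ∈ l, (l.map f).prod = f a := by
  induction hl with
  | nil => simp
  | singleton a => simp
  | @cons_concat a l _ ih =>
    have hprod : ((a :: (l ++ [a])).map f).prod = (l.map f).prod := by
      simp [mul_comm (f a), mul_assoc, ← sq, hA]
    rw [hprod]
    rcases ih with h | ⟨b, hb, h⟩
    · exact Or.inl h
    · exact Or.inr ⟨b, by simp [hb], h⟩

theorem hammingNorm_add_le {ι : Type*} {β : ι → Type*} [Fintype ι] [∀ i, AddGroup (β i)]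
    [∀ i, DecidableEq (β i)] (x y : ∀ i, β i) :
    hammingNorm (x + y) ≤ hammingNorm x + hammingNorm y := by
  calc hammingNorm (x + y) = hammingDist (-x) y := by rw [hammingDist_eq_hammingNorm, neg_neg]
    _ ≤ hammingDist (-x) 0 + hammingDist 0 y := hammingDist_triangle _ _ _
    _ = hammingNorm x + hammingNorm y := by simp [hammingDist_eq_hammingNorm]

theorem Multiplicative.sq_eq_one_of_zmod_two {ι : Type*} (a : Multiplicative (ι → ZMod 2)) :
    a ^ 2 = 1 := by
  ext i
  simp [sq, CharTwo.add_self_eq_zero]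

section LowerBound

variable {G : Type*} [Group G] {n : ℕ} (X : Fin n → G)

theorem IsPalindrome.map_eq_one_or {A : Type*} [CommGroup A] (hA : ∀ a : A, a ^ 2 = 1)
    (f : G →* A) {p : G} (hp : IsPalindrome X p) : f p = 1 ∨ ∃ i, f p = f (X i) := by
  obtain ⟨w, hw, rfl⟩ := hp
  have hinv : ∀ a : A, a⁻¹ = a := fun a => inv_eq_of_mul_eq_one_right (by rw [← sq, hA])
  have hf : f (evalWord X w) = (w.map fun l => f (X l.1)).prod := by
    simp only [evalWord, map_list_prod, List.map_map]
    congr 1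
    refine List.map_congr_left fun ⟨i, b⟩ _ => ?_
    cases b <;> simp [hinv]
  rw [hf]
  rcases (List.Palindrome.of_reverse_eq hw).prod_map_eq_one_or hA (fun l => f (X l.1)) with
    h | ⟨l, -, h⟩
  · exact Or.inl h
  · exact Or.inr ⟨l.1, h⟩

theorem hammingNorm_le_of_isPalProd {ι : Type*} [Fintype ι] (f : G →* Multiplicative (ι → ZMod 2))
    (hf : ∀ i, hammingNorm (f (X i)).toAdd ≤ 1) {m : ℕ} {g : G} (h : IsPalProd X m g) :
    hammingNorm (f g).toAdd ≤ m := by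
  obtain ⟨l, rfl, hl, rfl⟩ := (isPalProd_iff X).1 h
  clear h
  induction l with
  | nil => simp
  | cons p l ih =>
    have hp : hammingNorm (f p).toAdd ≤ 1 := by
      rcases (hl p List.mem_cons_self).map_eq_one_or X Multiplicative.sq_eq_one_of_zmod_two f
        with h | ⟨i, h⟩ <;> simp [h, hf]
    calc hammingNorm (f (p :: l).prod).toAdd
        ≤ hammingNorm (f p).toAdd + hammingNorm (f l.prod).toAdd := by
          simpa using hammingNorm_add_le (f p).toAdd (f l.prod).toAdd
      _ ≤ 1 + l.length := add_le_add hp (ih fun q hq => hl q (List.mem_cons_of_mem _ hq))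
      _ = (p :: l).length := by simp [add_comm]

theorem le_palWidth_of_map_eq_single (f : G →* Multiplicative (Fin n → ZMod 2))
    (hf : ∀ i, f (X i) = Multiplicative.ofAdd (Pi.single i 1)) : (n : ℕ∞) ≤ palWidth X := by
  refine le_palWidth X (List.ofFn X).prod fun m hm => ?_
  have hsingle : ∀ i, hammingNorm (f (X i)).toAdd ≤ 1 := fun i => by
    simpa [hf, hammingNorm] using Finset.card_le_one.2 fun a ha b hb => by
      simp_all [Pi.single_apply]
  have hones : (f (List.ofFn X).prod).toAdd = fun _ => 1 := by
    simp [map_list_prod, List.prod_ofFn, hf, toAdd_prod, Finset.univ_sum_single]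
  simpa [hones, hammingNorm] using hammingNorm_le_of_isPalProd X f hsingle hm

end LowerBound

theorem Subgroup.commutator_closure_le {G : Type*} [Group G] {H N : Subgroup G} [N.Normal]
    {S : Set G} (h : ∀ a ∈ H, ∀ s ∈ S, ⁅a, s⁆ ∈ N) : ⁅H, closure S⁆ ≤ N := by
  rw [commutator_le]
  intro a ha b hb
  induction hb using closure_induction with
  | mem s hs => exact h a ha s hs
  | one => simp [one_mem]
  | mul b c _ _ hb hc =>
    rw [commutatorElement_mul_right_eq_mul_conj, mul_assoc _ b, mul_assoc]
    exact mul_mem hb (by simpa [mul_assoc] using Normal.conj_mem ‹_› _ hc b)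
  | inv b _ hb =>
    rw [commutatorElement_inv_right, ← commutatorElement_inv]
    simpa using Normal.conj_mem ‹_› _ (inv_mem hb) b⁻¹

theorem Subgroup.normal_of_le_center {G : Type*} [Group G] {K : Subgroup G} (h : K ≤ center G) :
    K.Normal :=
  ⟨fun a ha g => by rwa [mem_center_iff.mp (h ha) g, mul_inv_cancel_right]⟩

theorem List.prod_ofFn_mul_center {G : Type*} [Group G] {m : ℕ} (a : Fin m → G)
    (c : Fin m → center G) :
    (List.ofFn fun i => a i * c i).prod = (List.ofFn a).prod * ↑(∏ i, c i) := by
  induction m with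
  | zero => simp
  | succ m ih =>
    simp only [List.ofFn_succ, List.prod_cons, Fin.prod_univ_succ, ih, coe_mul, mul_assoc]
    rw [← mul_assoc (c 0 : G), ← mem_center_iff.mp (c 0).2, mul_assoc]

section NilpotentNormalForm

variable {G : Type*} [Group G] {n : ℕ}

local notation "γ" => Subgroup.lowerCentralSeries (⊤ : Subgroup G)

theorem commutatorElement_mem_lowerCentralSeries_succ (a : G) {d : ℕ} {v : G} (hv : v ∈ γ d) :
    ⁅a, v⁆ ∈ γ (d + 1) := by
  rw [Subgroup.lowerCentralSeries_succ, commutator_comm]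
  exact commutator_mem_commutator (mem_top a) hv

theorem mk_mem_center_of_mem_lowerCentralSeries {c : ℕ} {g : G} (hg : g ∈ γ c) :
    (g : G ⧸ γ (c + 1)) ∈ center (G ⧸ γ (c + 1)) := by
  rw [mem_center_iff]
  intro q
  induction q using QuotientGroup.induction_on with
  | H b =>
    rw [← QuotientGroup.mk_mul, ← QuotientGroup.mk_mul, QuotientGroup.eq]
    have hcomm : (b * g)⁻¹ * (g * b) = ⁅g⁻¹, b⁻¹⁆ := by
      rw [commutatorElement_def]
      group
    rw [hcomm]
    exact commutator_mem_commutator (inv_mem hg) (mem_top b⁻¹)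

theorem map_commutatorElement_mul_of_mem_center {Q : Type*} [Group Q] (f : G →* Q) {a b c : G}
    (h : f ⁅a, c⁆ ∈ center Q) : f ⁅a, b * c⁆ = f ⁅a, b⁆ * f ⁅a, c⁆ := by
  rw [commutatorElement_mul_right_eq_mul_conj, map_mul, map_mul, map_mul, map_inv,
    mul_assoc _ (f b), mem_center_iff.mp h (f b), ← mul_assoc, mul_inv_cancel_right]

variable (x : Fin n → G)

def commForm (k : Fin n → ℤ) (u : Fin n → G) : G :=
  (List.ofFn fun i => x i ^ k i * ⁅x i, u i⁆).prod

def commutatorProdHom (d : ℕ) : (Fin n → γ d) →* center (G ⧸ γ (d + 2)) where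
  toFun v := ∏ i, ⟨_, mk_mem_center_of_mem_lowerCentralSeries
    (commutatorElement_mem_lowerCentralSeries_succ (x i) (v i).2)⟩
  map_one' := Finset.prod_eq_one fun i _ =>
    Subtype.ext <| show ((⁅x i, (1 : G)⁆ : G) : G ⧸ γ (d + 2)) = 1 by
      rw [commutatorElement_one_right, QuotientGroup.mk_one]
  map_mul' v w := by
    rw [← Finset.prod_mul_distrib]
    refine Finset.prod_congr rfl fun i _ => Subtype.ext ?_
    exact map_commutatorElement_mul_of_mem_center (QuotientGroup.mk' _)
      (mk_mem_center_of_mem_lowerCentralSeries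
        (commutatorElement_mem_lowerCentralSeries_succ (x i) (w i).2))

theorem commutatorProdHom_apply (d : ℕ) (v : Fin n → γ d) :
    commutatorProdHom x d v = ∏ i, ⟨_, mk_mem_center_of_mem_lowerCentralSeries
      (commutatorElement_mem_lowerCentralSeries_succ (x i) (v i).2)⟩ :=
  rfl

theorem commutatorProdHom_mulSingle (d : ℕ) (j : Fin n) (w : γ d) :
    (commutatorProdHom x d (Pi.mulSingle j w) : G ⧸ γ (d + 2)) = (⁅x j, (w : G)⁆ : G) := by
  rw [commutatorProdHom_apply, Finset.prod_eq_single j]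
  · simp
  · intro i _ hij
    exact Subtype.ext <| show ((⁅x i, _⁆ : G) : G ⧸ γ (d + 2)) = 1 by
      rw [Pi.mulSingle_eq_of_ne hij, OneMemClass.coe_one, commutatorElement_one_right,
        QuotientGroup.mk_one]
  · simp

theorem mk_commForm_mul (k : Fin n → ℤ) (u : Fin n → G) (d : ℕ) (v : Fin n → γ d) :
    QuotientGroup.mk' (γ (d + 2)) (commForm x k fun i => u i * v i)
      = QuotientGroup.mk' (γ (d + 2)) (commForm x k u) * commutatorProdHom x d v := by
  rw [commForm, commForm, map_list_prod, map_list_prod, List.map_ofFn, List.map_ofFn,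
    commutatorProdHom_apply, ← List.prod_ofFn_mul_center]
  refine congrArg List.prod (congrArg List.ofFn (funext fun i => ?_))
  simp only [Function.comp_apply, map_mul, mul_assoc]
  rw [map_commutatorElement_mul_of_mem_center _ (mk_mem_center_of_mem_lowerCentralSeries
    (commutatorElement_mem_lowerCentralSeries_succ (x i) (v i).2))]
  rfl

theorem exists_commutatorProdHom_eq (hx : closure (Set.range x) = ⊤) (d : ℕ) {z : G}
    (hz : z ∈ γ (d + 1)) : ∃ v, (commutatorProdHom x d v : G ⧸ γ (d + 2)) = z := by
  let Φ := (center _).subtype.comp (commutatorProdHom x d)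
  -- `Φ.range` is central, hence normal, so commutators with the generators `x j` suffice.
  have : Φ.range.Normal := normal_of_le_center <| by
    rintro _ ⟨v, rfl⟩
    exact (commutatorProdHom x d v).2
  suffices γ (d + 1) ≤ Φ.range.comap (QuotientGroup.mk' _) from this hz
  have hγ : γ (d + 1) = ⁅γ d, closure (Set.range x)⁆ := by rw [hx]; rfl
  rw [hγ]
  refine commutator_closure_le ?_
  rintro a ha _ ⟨j, rfl⟩
  refine ⟨(Pi.mulSingle j ⟨a, ha⟩)⁻¹, ?_⟩
  simp only [Φ, MonoidHom.coe_comp, Function.comp_apply, map_inv, coe_subtype]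
  rw [commutatorProdHom_mulSingle, QuotientGroup.mk'_apply, ← QuotientGroup.mk_inv,
    commutatorElement_inv]

theorem exists_commForm_inv_mul_mem_commutator (hx : closure (Set.range x) = ⊤) (g : G) :
    ∃ k, (commForm x k 1)⁻¹ * g ∈ γ 1 := by
  have hg : Abelianization.of g ∈ closure (Set.range (Abelianization.of ∘ x)) := by
    rw [Set.range_comp, ← MonoidHom.map_closure, hx]
    exact ⟨g, mem_top g, rfl⟩
  obtain ⟨k, hk⟩ := mem_closure_range_iff_of_fintype.1 hg
  refine ⟨k, ?_⟩
  rw [top_lowerCentralSeries_one, ← Abelianization.ker_of, MonoidHom.mem_ker, map_mul, map_inv, hk]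
  simp [commForm, map_list_prod, List.prod_ofFn]

theorem exists_commForm_inv_mul_mem (hx : closure (Set.range x) = ⊤) :
    ∀ (c : ℕ) (g : G), ∃ k u, (commForm x k u)⁻¹ * g ∈ γ (c + 1)
  | 0, g => (exists_commForm_inv_mul_mem_commutator x hx g).imp fun k hk => ⟨1, hk⟩
  | d + 1, g => by
    obtain ⟨k, u, hz⟩ := exists_commForm_inv_mul_mem hx d g
    obtain ⟨v, hv⟩ := exists_commutatorProdHom_eq x hx d hz
    refine ⟨k, fun i => u i * v i, ?_⟩
    rw [← QuotientGroup.eq_one_iff, ← QuotientGroup.mk'_apply, map_mul, map_inv, mk_commForm_mul,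
      mul_inv_rev, mul_assoc, ← map_inv, ← map_mul, QuotientGroup.mk'_apply, ← hv, inv_mul_cancel]

theorem exists_commForm_eq [Group.IsNilpotent G] (hx : closure (Set.range x) = ⊤) (g : G) :
    ∃ k u, commForm x k u = g := by
  obtain ⟨r, hr⟩ := Subgroup.nilpotent_iff_lowerCentralSeries.1 ‹Group.IsNilpotent G›
  obtain ⟨k, u, h⟩ := exists_commForm_inv_mul_mem x hx r g
  have hbot : γ (r + 1) = ⊥ := le_bot_iff.1 (hr ▸ Subgroup.lowerCentralSeries_antitone _ r.le_succ)
  rw [hbot, mem_bot, inv_mul_eq_one] at h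
  exact ⟨k, u, h⟩

end NilpotentNormalForm

theorem isPalProd_two_mul_of_isNilpotent {G : Type*} [Group G] [Group.IsNilpotent G] {n : ℕ}
    (X : Fin n → G) (hX : ∀ i, X i ^ 2 = 1) (hgen : closure (Set.range X) = ⊤) (g : G) :
    IsPalProd X (2 * n) g := by
  obtain ⟨k, u, rfl⟩ := exists_commForm_eq X hgen g
  have hblock : ∀ i, IsPalProd X 2 (X i ^ k i * ⁅X i, u i⁆) := fun i => by
    have hsplit : X i ^ k i * ⁅X i, u i⁆ = X i ^ (k i + 1) * (u i * X i ^ (-1 : ℤ) * (u i)⁻¹) := by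
      rw [commutatorElement_def, zpow_add_one, zpow_neg_one]
      group
    rw [hsplit]
    refine (isPalProd_iff X).2 ⟨[X i ^ (k i + 1), u i * X i ^ (-1 : ℤ) * (u i)⁻¹], rfl, ?_,
      by rw [List.prod_cons, List.prod_singleton]⟩
    simpa only [List.mem_cons, List.not_mem_nil, or_false, forall_eq_or_imp, forall_eq] using
      ⟨isPalindrome_zpow X i _, (isPalindrome_zpow X i (-1)).conj X hX hgen (u i)⟩
  have h := isPalProd_list_prod X (List.ofFn fun i => X i ^ k i * ⁅X i, u i⁆) fun b hb => by
    obtain ⟨i, rfl⟩ := (List.mem_ofFn' _ _).1 hb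
    exact hblock i
  rwa [List.length_ofFn] at h

instance Group.isNilpotent_quotient_lowerCentralSeries {G : Type*} [Group G] (r : ℕ) :
    Group.IsNilpotent (G ⧸ (⊤ : Subgroup G).lowerCentralSeries r) := by
  refine Subgroup.nilpotent_iff_lowerCentralSeries.2 ⟨r, ?_⟩
  rw [← map_top_of_surjective _ (QuotientGroup.mk'_surjective _), ← map_lowerCentralSeries,
    Subgroup.map_eq_bot_iff, QuotientGroup.ker_mk']

theorem closure_range_tnGen (n r : ℕ) : closure (Set.range (tnGen n r)) = ⊤ := by
  rw [← FreeGroup.range_lift_eq_closure, MonoidHom.range_eq_top]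
  have hlift : FreeGroup.lift (tnGen n r) = (QuotientGroup.mk' _).comp (QuotientGroup.mk' _) :=
    FreeGroup.ext_hom _ _ fun i => by rw [FreeGroup.lift_apply_of]; rfl
  rw [hlift]
  exact (QuotientGroup.mk'_surjective _).comp (QuotientGroup.mk'_surjective _)

theorem tnGen_sq (n r : ℕ) (i : Fin n) : tnGen n r i ^ 2 = 1 := by
  rw [tnGen, ← QuotientGroup.mk_pow, QuotientGroup.eq_one_iff]
  exact subset_normalClosure ⟨i, rfl⟩

def tildeNilLift {n r : ℕ} {A : Type*} [CommGroup A] (a : Fin n → A) (ha : ∀ i, a i ^ 2 = 1)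
    (hr : 1 ≤ r) : TildeNil n r →* A :=
  QuotientGroup.lift _
    (QuotientGroup.lift _ (FreeGroup.lift a) <|
      (Subgroup.lowerCentralSeries_antitone _ hr).trans <| by
        rw [top_lowerCentralSeries_one]
        exact Abelianization.commutator_subset_ker _)
    (normalClosure_le_normal <| by
      rintro _ ⟨i, rfl⟩
      simp [nilGen, ha])

theorem tildeNilLift_tnGen {n r : ℕ} {A : Type*} [CommGroup A] (a : Fin n → A)
    (ha : ∀ i, a i ^ 2 = 1) (hr : 1 ≤ r) (i : Fin n) :
    tildeNilLift a ha hr (tnGen n r i) = a i := by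
  rw [tildeNilLift, tnGen, nilGen, QuotientGroup.lift_mk, QuotientGroup.lift_mk,
    FreeGroup.lift_apply_of]

theorem pw_tildeNil_bounds_general (n r : ℕ) (hr : 2 ≤ r) :
    (n : ℕ∞) ≤ palWidth (tnGen n r) ∧ palWidth (tnGen n r) ≤ ((2 * n : ℕ) : ℕ∞) := by
  let e : Fin n → Multiplicative (Fin n → ZMod 2) := fun i => Multiplicative.ofAdd (Pi.single i 1)
  have he : ∀ i, e i ^ 2 = 1 := fun i => Multiplicative.sq_eq_one_of_zmod_two _
  exact ⟨le_palWidth_of_map_eq_single _ (tildeNilLift e he (by omega)) (tildeNilLift_tnGen e he _),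
    palWidth_le _ (isPalProd_two_mul_of_isNilpotent _ (tnGen_sq n r) (closure_range_tnGen n r))⟩

/-- For `n ≥ 2` and `r ≥ 2`, `n ≤ pw(Ñ_{n,r}, Y) ≤ 2n`. -/
theorem pw_tildeNil_bounds (n r : ℕ) (hn : 2 ≤ n) (hr : 2 ≤ r) :
    (n : ℕ∞) ≤ palWidth (tnGen n r) ∧ palWidth (tnGen n r) ≤ ((2 * n : ℕ) : ℕ∞) :=
  pw_tildeNil_bounds_general n r hr
end

section
/- Let n ≥ 2 and let N_{n,2} be the free nilpotent group of rank n and step 2 with generating family X = (x_1, …, x_n). Every palindrome p in N_{n,2} (with respect to X) can be written, for some index j with 1 ≤ j ≤ n and integers α_1, …, α_n, in the normal form p = x_1^{2α_1} ⋯ x_{j-1}^{2α_{j-1}} · x_j^{α_j} · x_{j+1}^{2α_{j+1}} ⋯ x_n^{2α_n} · ∏_{1 ≤ l < k ≤ n, k ≠ j, l ≠ j} [x_k, x_l]^{2 α_k α_l} · ∏_{t=1}^{j-1} [x_j, x_t]^{α_j α_t} · ∏_{s=j+1}^{n} [x_s, x_j]^{α_s α_j}, where the commutator factors are central in N_{n,2}.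 -/
/-- The commutator convention of the paper: `[a, b] = a⁻¹ b⁻¹ a b`. -/
def pcomm {G : Type*} [Group G] (a b : G) : G := a⁻¹ * b⁻¹ * a * b

/-- The list of all pairs `(k, l)` of indices with `l < k`, used to order products of
basic commutators (which are central, so the order is immaterial). -/
def pairList (n : ℕ) : List (Fin n × Fin n) :=
  (List.finRange n).flatMap fun k => ((List.finRange n).filter fun l => l < k).map fun l => (k, l)

/-!
In a group of nilpotency class at most two, commutators are central and bimultiplicative. For
`s(β) = x_1^{β_1} ⋯ x_n^{β_n}` this gives `s(β) s(γ) = s(β + γ) · ∏_{l<k} [x_k, x_l]^{β_k γ_l}`,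
while `s(-β)⁻¹ = x_n^{β_n} ⋯ x_1^{β_1}` is the reversed product. A palindromic word is `u c u^R`
with `c` empty or a single letter; peeling off its letters from the outside, the product formula
shows that its value is `s(β) x_j^a s(-β)⁻¹` for some `β`, `j`, `a`, the commutator corrections
on the two sides cancelling. One more application of the product formula expands
`s(β) x_j^a s(-β)⁻¹` into the normal form, with `α = β` away from `j` and `α_j = 2 β_j + a`.
-/

open scoped IsMulCommutative commutatorElement

theorem prod_map_filter_finRange {M : Type*} [CommMonoid M] {n : ℕ} (p : Fin n → Prop)
    [DecidablePred p] (f : Fin n → M) :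
    (((List.finRange n).filter p).map f).prod = ∏ t, if p t then f t else 1 := by
  rw [Fin.prod_univ_def, List.prod_map_ite]
  simp

theorem prod_map_filter_pairList {M : Type*} [CommMonoid M] {n : ℕ} (p : Fin n × Fin n → Prop)
    [DecidablePred p] (f : Fin n × Fin n → M) :
    (((pairList n).filter p).map f).prod = ∏ k, ∏ l, if l < k ∧ p (k, l) then f (k, l) else 1 := by
  rw [pairList, List.filter_flatMap, List.map_flatMap, List.flatMap_def, List.prod_flatten,
    List.map_map, Fin.prod_univ_def]
  refine congrArg _ (List.map_congr_left fun k _ => ?_)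
  simp [← prod_map_filter_finRange, List.filter_map, List.filter_filter, Function.comp_def,
    Bool.and_comm]

section ClassTwo

variable {G : Type*} [Group G]

theorem mul_eq_mul_mul_pcomm (a b : G) : a * b = b * a * pcomm a b := by
  simp only [pcomm]
  group

theorem pcomm_inv (a b : G) : (pcomm a b)⁻¹ = pcomm b a := by
  simp only [pcomm]
  group

theorem pcomm_mem_center (hG : commutator G ≤ Subgroup.center G) (a b : G) :
    pcomm a b ∈ Subgroup.center G := by
  have h : pcomm a b = ⁅a⁻¹, b⁻¹⁆ := by
    rw [commutatorElement_def, pcomm]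
    group
  exact h ▸ hG (Subgroup.commutator_mem_commutator (Subgroup.mem_top _) (Subgroup.mem_top _))

variable {n : ℕ} (x : Fin n → G) (hG : commutator G ≤ Subgroup.center G)

def pcommHom (b : G) : G →* Subgroup.center G where
  toFun a := ⟨pcomm a b, pcomm_mem_center hG a b⟩
  map_one' := by ext; simp [pcomm]
  map_mul' a a' := by
    ext
    have hz := Subgroup.mem_center_iff.mp (pcomm_mem_center hG a b) a'⁻¹
    calc pcomm (a * a') b = a'⁻¹ * pcomm a b * (b⁻¹ * a' * b) := by simp only [pcomm]; group
      _ = pcomm a b * pcomm a' b := by rw [hz]; simp only [pcomm]; group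

@[simp]
theorem coe_pcommHom (a b : G) : (pcommHom hG b a : G) = pcomm a b := rfl

theorem pcommHom_zpow_zpow (a b : G) (m p : ℤ) :
    pcommHom hG (b ^ p) (a ^ m) = pcommHom hG b a ^ (m * p) := by
  have hswap : ∀ c d : G, pcommHom hG d c = (pcommHom hG c d)⁻¹ := fun c d => by
    ext
    simp [pcomm_inv]
  rw [map_zpow, hswap, map_zpow, ← inv_zpow, ← hswap, ← zpow_mul, mul_comm]

def orderedProd (β : Fin n → ℤ) : G :=
  ((List.finRange n).map fun t => x t ^ β t).prod

def commProd (M : Fin n → Fin n → ℤ) : Subgroup.center G :=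
  ∏ k, ∏ l, if l < k then pcommHom hG (x l) (x k) ^ M k l else 1

def sandwich (β : Fin n → ℤ) (g : G) : G :=
  orderedProd x β * g * (orderedProd x (-β))⁻¹

def palindromeNormalForm (j : Fin n) (α : Fin n → ℤ) : G :=
  (((List.finRange n).map fun t => x t ^ (if t = j then α j else 2 * α t)).prod)
    * ((((pairList n).filter fun q => q.1 ≠ j ∧ q.2 ≠ j).map fun q =>
        pcomm (x q.1) (x q.2) ^ (2 * α q.1 * α q.2)).prod)
    * ((((List.finRange n).filter fun t => t < j).map fun t =>
        pcomm (x j) (x t) ^ (α j * α t)).prod)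
    * ((((List.finRange n).filter fun s => j < s).map fun s =>
        pcomm (x s) (x j) ^ (α s * α j)).prod)

theorem orderedProd_succ (x : Fin (n + 1) → G) (β : Fin (n + 1) → ℤ) :
    orderedProd x β = x 0 ^ β 0 * orderedProd (fun t => x t.succ) (fun t => β t.succ) := by
  simp [orderedProd, List.finRange_succ, Function.comp_def]

@[simp]
theorem orderedProd_zero : orderedProd x 0 = 1 := by
  simp [orderedProd]

theorem orderedProd_single (i : Fin n) (m : ℤ) : orderedProd x (Pi.single i m) = x i ^ m := by
  rw [orderedProd, List.prod_map_eq_pow_single i _ fun t ht _ => by simp [ht]]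
  simp

theorem commProd_add (M N : Fin n → Fin n → ℤ) :
    commProd x hG (M + N) = commProd x hG M * commProd x hG N := by
  simp only [commProd, ← Finset.prod_mul_distrib]
  refine Finset.prod_congr rfl fun k _ => Finset.prod_congr rfl fun l _ => ?_
  split_ifs <;> simp [zpow_add]

theorem commProd_neg (M : Fin n → Fin n → ℤ) : commProd x hG (-M) = (commProd x hG M)⁻¹ := by
  simp only [commProd, ← Finset.prod_inv_distrib]
  refine Finset.prod_congr rfl fun k _ => Finset.prod_congr rfl fun l _ => ?_
  split_ifs <;> simp [zpow_neg]

theorem commProd_congr {M N : Fin n → Fin n → ℤ} (h : ∀ k l, l < k → M k l = N k l) :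
    commProd x hG M = commProd x hG N :=
  Finset.prod_congr rfl fun k _ => Finset.prod_congr rfl fun l _ => by
    split_ifs with hlk <;> simp [h k l, hlk]

theorem commProd_succ (x : Fin (n + 1) → G) (M : Fin (n + 1) → Fin (n + 1) → ℤ) :
    commProd x hG M = (∏ k : Fin n, pcommHom hG (x 0) (x k.succ) ^ M k.succ 0)
      * commProd (fun t => x t.succ) hG (fun k l => M k.succ l.succ) := by
  simp [commProd, Fin.prod_univ_succ, Finset.prod_mul_distrib, Fin.succ_pos]

theorem coe_commProd_ite (P : Fin n → Fin n → Prop) [DecidableRel P] (e : Fin n → Fin n → ℤ) :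
    (commProd x hG (fun k l => if P k l then e k l else 0) : G)
      = (((pairList n).filter fun q => P q.1 q.2).map fun q =>
          pcomm (x q.1) (x q.2) ^ e q.1 q.2).prod := by
  have h := congrArg Subtype.val <| prod_map_filter_pairList (fun q => P q.1 q.2)
    (fun q => pcommHom hG (x q.2) (x q.1) ^ e q.1 q.2)
  simp only [SubmonoidClass.coe_list_prod, List.map_map, Function.comp_def,
    SubgroupClass.coe_zpow, coe_pcommHom] at h
  rw [h, commProd]
  congr 1
  refine Finset.prod_congr rfl fun k _ => Finset.prod_congr rfl fun l _ => ?_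
  split_ifs <;> simp_all

theorem coe_commProd_row (j : Fin n) (e : Fin n → ℤ) :
    (commProd x hG (fun k l => if k = j then e l else 0) : G)
      = (((List.finRange n).filter fun t => t < j).map fun t => pcomm (x j) (x t) ^ e t).prod := by
  have h := congrArg Subtype.val <| prod_map_filter_finRange (fun t => t < j)
    (fun t => pcommHom hG (x t) (x j) ^ e t)
  simp only [SubmonoidClass.coe_list_prod, List.map_map, Function.comp_def,
    SubgroupClass.coe_zpow, coe_pcommHom] at h
  rw [h, commProd, Finset.prod_eq_single j (fun k _ hk => by simp [hk]) (by simp)]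
  simp

theorem coe_commProd_column (j : Fin n) (e : Fin n → ℤ) :
    (commProd x hG (fun k l => if l = j then e k else 0) : G)
      = (((List.finRange n).filter fun s => j < s).map fun s => pcomm (x s) (x j) ^ e s).prod := by
  have h := congrArg Subtype.val <| prod_map_filter_finRange (fun s => j < s)
    (fun s => pcommHom hG (x j) (x s) ^ e s)
  simp only [SubmonoidClass.coe_list_prod, List.map_map, Function.comp_def,
    SubgroupClass.coe_zpow, coe_pcommHom] at h
  rw [h, commProd]
  congr 1
  refine Finset.prod_congr rfl fun k _ => ?_
  rw [Finset.prod_eq_single j (fun l _ hl => by simp [hl]) (by simp)]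
  simp

theorem orderedProd_mul_eq_mul_orderedProd (β : Fin n → ℤ) (y : G) :
    orderedProd x β * y
      = y * orderedProd x β * (∏ t, pcommHom hG y (x t) ^ β t : Subgroup.center G) := by
  rw [mul_eq_mul_mul_pcomm, ← coe_pcommHom hG, orderedProd, map_list_prod, List.map_map,
    Fin.prod_univ_def]
  simp [Function.comp_def]

theorem orderedProd_mul_orderedProd (β γ : Fin n → ℤ) :
    orderedProd x β * orderedProd x γ
      = orderedProd x (β + γ) * commProd x hG (fun k l => β k * γ l) := by
  induction n with
  | zero => simp [orderedProd, commProd]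
  | succ n ih =>
    obtain ⟨P, hP⟩ : ∃ P : Subgroup.center G,
        P = ∏ k : Fin n, pcommHom hG (x 0) (x k.succ) ^ (β k.succ * γ 0) := ⟨_, rfl⟩
    have hPc : ∀ g : G, (P : G) * g = g * P := fun g => (Subgroup.mem_center_iff.mp P.2 g).symm
    rw [orderedProd_succ x β, orderedProd_succ x γ, orderedProd_succ x (β + γ), commProd_succ,
      ← hP]
    set x' : Fin n → G := fun t => x t.succ
    have hmove : orderedProd x' (fun t => β t.succ) * x 0 ^ γ 0
        = x 0 ^ γ 0 * orderedProd x' (fun t => β t.succ) * P := by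
      rw [orderedProd_mul_eq_mul_orderedProd _ hG, hP]
      simp only [← map_zpow, pcommHom_zpow_zpow, x']
    calc x 0 ^ β 0 * orderedProd x' (fun t => β t.succ) * (x 0 ^ γ 0 * orderedProd x' _)
        = x 0 ^ β 0 * (orderedProd x' (fun t => β t.succ) * x 0 ^ γ 0)
          * orderedProd x' (fun t => γ t.succ) := by simp only [mul_assoc]
      _ = x 0 ^ (β 0 + γ 0) * (orderedProd x' (fun t => β t.succ)
          * orderedProd x' (fun t => γ t.succ)) * P := by
        rw [hmove, zpow_add]
        simp only [mul_assoc, hPc]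
      _ = _ := by
        rw [ih, Subgroup.coe_mul, Subgroup.mem_center_iff.mp (commProd _ hG _).2 (P : G)]
        simp only [mul_assoc]
        rfl

@[simp]
theorem sandwich_zero (g : G) : sandwich x 0 g = g := by
  simp [sandwich]

theorem orderedProd_mul_sandwich (hG : commutator G ≤ Subgroup.center G) (γ β : Fin n → ℤ)
    (g : G) :
    orderedProd x γ * sandwich x β g * (orderedProd x (-γ))⁻¹ = sandwich x (γ + β) g := by
  have hneg : orderedProd x (-γ) * orderedProd x (-β)
      = orderedProd x (-(γ + β)) * commProd x hG (fun k l => γ k * β l) := by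
    rw [orderedProd_mul_orderedProd x hG, neg_add]
    simp only [Pi.neg_apply, neg_mul_neg]
  have hc := Subgroup.mem_center_iff.mp (commProd x hG fun k l => γ k * β l).2
  calc orderedProd x γ * sandwich x β g * (orderedProd x (-γ))⁻¹
      = orderedProd x γ * orderedProd x β * g
        * (orderedProd x (-γ) * orderedProd x (-β))⁻¹ := by
        simp only [sandwich]
        group
    _ = _ := by
        rw [orderedProd_mul_orderedProd x hG, hneg, mul_inv_rev, mul_assoc _ _ g, ← hc, sandwich]
        group

theorem sandwich_orderedProd (β γ : Fin n → ℤ) :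
    sandwich x β (orderedProd x γ)
      = orderedProd x (2 • β + γ)
        * commProd x hG (fun k l => (2 * β k + γ k) * β l + β k * γ l) := by
  have hsplit : orderedProd x (2 • β + γ) * orderedProd x (-β)
      = orderedProd x (β + γ) * commProd x hG (fun k l => (2 * β k + γ k) * -β l) := by
    rw [orderedProd_mul_orderedProd x hG]
    congr 2
    ext t
    simp
    ring
  have hcomm : commProd x hG (fun k l => (2 * β k + γ k) * β l + β k * γ l)
      = (commProd x hG (fun k l => (2 * β k + γ k) * -β l))⁻¹
        * commProd x hG (fun k l => β k * γ l) := by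
    rw [← commProd_neg, ← commProd_add]
    exact commProd_congr x hG fun k l _ => by simp only [Pi.add_apply, Pi.neg_apply]; ring
  set z := (commProd x hG (fun k l => (2 * β k + γ k) * -β l))⁻¹
    * commProd x hG (fun k l => β k * γ l)
  have hz := Subgroup.mem_center_iff.mp z.2
  calc sandwich x β (orderedProd x γ)
      = orderedProd x (2 • β + γ) * orderedProd x (-β) * z * (orderedProd x (-β))⁻¹ := by
        rw [sandwich, orderedProd_mul_orderedProd x hG, ← mul_inv_eq_iff_eq_mul.mpr hsplit]
        simp only [z, Subgroup.coe_mul, Subgroup.coe_inv, mul_assoc]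
    _ = _ := by
        rw [hcomm, mul_assoc _ _ (z : G), hz]
        group

theorem sandwich_zpow_eq_palindromeNormalForm (hG : commutator G ≤ Subgroup.center G) (β : Fin n → ℤ) (j : Fin n) (a : ℤ) :
    sandwich x β (x j ^ a) = palindromeNormalForm x j (Function.update β j (2 * β j + a)) := by
  set α := Function.update β j (2 * β j + a)
  have hpow : 2 • β + Pi.single j a = fun t => if t = j then α j else 2 * α t := by
    ext t
    by_cases ht : t = j <;> simp [α, ht]
  have hexp : ∀ k l, l < k →
      (2 * β k + (Pi.single j a : Fin n → ℤ) k) * β l + β k * (Pi.single j a : Fin n → ℤ) l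
        = ((fun k l => if k ≠ j ∧ l ≠ j then 2 * α k * α l else 0)
          + (fun k l => if k = j then α j * α l else 0)
          + (fun k l => if l = j then α k * α j else 0)) k l := by
    intro k l hlk
    by_cases hk : k = j
    · subst hk
      simp [α, hlk.ne, Function.update_apply]
    · by_cases hl : l = j
      · subst hl
        simp [α, hk, Function.update_apply]
        ring
      · simp [α, hk, hl, Function.update_apply]
  rw [← orderedProd_single x j a, sandwich_orderedProd x hG, hpow, commProd_congr x hG hexp,
    commProd_add, commProd_add, Subgroup.coe_mul, Subgroup.coe_mul, coe_commProd_ite,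
    coe_commProd_row, coe_commProd_column, palindromeNormalForm]
  simp only [mul_assoc]
  rfl

theorem evalWord_singleton (i : Fin n) (b : Bool) :
    evalWord x [(i, b)] = x i ^ (if b then 1 else -1 : ℤ) := by
  cases b <;> simp [evalWord]

theorem evalWord_cons_append_singleton (c : Fin n × Bool) (w : List (Fin n × Bool)) :
    evalWord x (c :: (w ++ [c])) = evalWord x [c] * evalWord x w * evalWord x [c] := by
  simp [evalWord, mul_assoc]

theorem exists_evalWord_eq_sandwich_of_palindrome (hG : commutator G ≤ Subgroup.center G)
    (hn : 0 < n) {w : List (Fin n × Bool)} (hw : w.Palindrome) :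
    ∃ (β : Fin n → ℤ) (j : Fin n) (a : ℤ), evalWord x w = sandwich x β (x j ^ a) := by
  induction hw with
  | nil => exact ⟨0, ⟨0, hn⟩, 0, by simp [evalWord]⟩
  | singleton c => exact ⟨0, c.1, _, by rw [sandwich_zero, evalWord_singleton]⟩
  | cons_concat c _ ih =>
    obtain ⟨β, j, a, hw⟩ := ih
    set ε : ℤ := if c.2 then 1 else -1
    refine ⟨Pi.single c.1 ε + β, j, a, ?_⟩
    rw [evalWord_cons_append_singleton, hw, ← orderedProd_mul_sandwich x hG,
      evalWord_singleton x c.1 c.2]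
    conv_rhs => rw [← Pi.single_neg, orderedProd_single, orderedProd_single, zpow_neg, inv_inv]

end ClassTwo

theorem commutator_le_center_quotient_lowerCentralSeries_two (F : Type*) [Group F] :
    commutator (F ⧸ (⊤ : Subgroup F).lowerCentralSeries 2)
      ≤ Subgroup.center (F ⧸ (⊤ : Subgroup F).lowerCentralSeries 2) := by
  set N := (⊤ : Subgroup F).lowerCentralSeries 2
  rw [← Subgroup.commutator_top_right_eq_bot_iff_le_center, ← Subgroup.top_lowerCentralSeries_one,
    ← Subgroup.lowerCentralSeries_succ,
    ← Subgroup.map_top_of_surjective (QuotientGroup.mk' N) (QuotientGroup.mk'_surjective N),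
    ← Subgroup.map_lowerCentralSeries, QuotientGroup.map_mk'_self]

/-- Normal form for palindromes in `N_{n,2}`: every palindrome `p` can be written, for some
index `j` and integers `α_1, …, α_n`, as
`x_1^{2α_1} ⋯ x_{j-1}^{2α_{j-1}} · x_j^{α_j} · x_{j+1}^{2α_{j+1}} ⋯ x_n^{2α_n} ·
 ∏_{l<k, k≠j, l≠j} [x_k,x_l]^{2α_k α_l} · ∏_{t<j} [x_j,x_t]^{α_j α_t} ·
 ∏_{s>j} [x_s,x_j]^{α_s α_j}`, the commutator factors being central in `N_{n,2}`. -/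
theorem palindrome_normal_form_freeNilpotent_two (n : ℕ) (hn : 2 ≤ n)
    (p : FreeNilpotent n 2) (hp : IsPalindrome (nilGen n 2) p) :
    (∀ k l : Fin n,
        pcomm (nilGen n 2 k) (nilGen n 2 l) ∈ Subgroup.center (FreeNilpotent n 2)) ∧
      ∃ (j : Fin n) (α : Fin n → ℤ),
        p = (((List.finRange n).map fun t =>
                nilGen n 2 t ^ (if t = j then α j else 2 * α t)).prod)
            * ((((pairList n).filter fun q => q.1 ≠ j ∧ q.2 ≠ j).map fun q =>
                pcomm (nilGen n 2 q.1) (nilGen n 2 q.2) ^ (2 * α q.1 * α q.2)).prod)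
            * ((((List.finRange n).filter fun t => t < j).map fun t =>
                pcomm (nilGen n 2 j) (nilGen n 2 t) ^ (α j * α t)).prod)
            * ((((List.finRange n).filter fun s => j < s).map fun s =>
                pcomm (nilGen n 2 s) (nilGen n 2 j) ^ (α s * α j)).prod) := by
  have hG := commutator_le_center_quotient_lowerCentralSeries_two (FreeGroup (Fin n))
  refine ⟨fun k l => pcomm_mem_center hG _ _, ?_⟩
  obtain ⟨w, hw, rfl⟩ := hp
  obtain ⟨β, j, a, hβ⟩ := exists_evalWord_eq_sandwich_of_palindrome (nilGen n 2) hG (by omega)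
    (List.Palindrome.of_reverse_eq hw)
  exact ⟨j, _, hβ.trans (sandwich_zpow_eq_palindromeNormalForm (nilGen n 2) hG β j a)⟩
end

section
/- Let G be a group generated by a family Y = (y_1, …, y_n) of involutions (y_i² = 1 for all i). Then: (a) for every g ∈ G and every palindrome p, the commutator [g, p] = g^{-1} p^{-1} g p is a product of 2 palindromes; (b) for every g ∈ G, every generator y = y_i, every α ∈ {0, 1}, the element [g, y] y^α is a product of 2 palindromes; and (c) for all g, h ∈ G and every generator y = y_i, the conjugate [g, y]^h = h^{-1} [g, y] h is a product of 2 palindromes. -/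
section Helpers

variable {G : Type*} [Group G] {n : ℕ} (Y : Fin n → G)

lemma pal_inv_self (hinv : ∀ i, Y i ^ 2 = 1) (i : Fin n) : (Y i)⁻¹ = Y i :=
  inv_eq_of_mul_eq_one_right (by rw [← pow_two]; exact hinv i)

lemma pal_prod_reverse (hinv : ∀ i, Y i ^ 2 = 1) (u : List (Fin n)) :
    ((u.reverse.map Y).prod) = ((u.map Y).prod)⁻¹ := by
  induction u with
  | nil => simp
  | cons i u ih =>
      rw [List.reverse_cons, List.map_append, List.prod_append, ih]
      simp [pal_inv_self Y hinv i]

lemma pal_exists_word (hY : Subgroup.closure (Set.range Y) = ⊤)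
    (hinv : ∀ i, Y i ^ 2 = 1) (g : G) :
    ∃ u : List (Fin n), (u.map Y).prod = g := by
  have hg : g ∈ Subgroup.closure (Set.range Y) := hY ▸ Subgroup.mem_top g
  induction hg using Subgroup.closure_induction with
  | mem x hx => obtain ⟨i, rfl⟩ := hx; exact ⟨[i], by simp⟩
  | one => exact ⟨[], by simp⟩
  | mul x y _ _ hx hy =>
      obtain ⟨u, rfl⟩ := hx; obtain ⟨v, rfl⟩ := hy; exact ⟨u ++ v, by simp⟩
  | inv x _ hx =>
      obtain ⟨u, rfl⟩ := hx; exact ⟨u.reverse, pal_prod_reverse Y hinv u⟩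

lemma pal_of_word (u : List (Fin n)) (hu : u.reverse = u) :
    IsPalindrome Y ((u.map Y).prod) := by
  refine ⟨u.map fun i => (i, true), ?_, ?_⟩
  · rw [← List.map_reverse, hu]
  · simp only [evalWord, List.map_map]
    congr 1

lemma pal_word_of (hinv : ∀ i, Y i ^ 2 = 1) {x : G} (hx : IsPalindrome Y x) :
    ∃ u : List (Fin n), u.reverse = u ∧ (u.map Y).prod = x := by
  obtain ⟨w, hw, he⟩ := hx
  refine ⟨w.map Prod.fst, ?_, ?_⟩
  · rw [← List.map_reverse, hw]
  · rw [← he]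
    simp only [evalWord, List.map_map]
    congr 1
    apply List.map_congr_left
    intro l _
    rcases l with ⟨i, b⟩
    cases b <;> simp [pal_inv_self Y hinv]

lemma pal_inv_eq (hinv : ∀ i, Y i ^ 2 = 1) {p : G} (hp : IsPalindrome Y p) :
    p⁻¹ = p := by
  obtain ⟨u, hu, rfl⟩ := pal_word_of Y hinv hp
  rw [← pal_prod_reverse Y hinv u, hu]

lemma pal_conj (hY : Subgroup.closure (Set.range Y) = ⊤) (hinv : ∀ i, Y i ^ 2 = 1)
    (g : G) {x : G} (hx : IsPalindrome Y x) : IsPalindrome Y (g⁻¹ * x * g) := by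
  obtain ⟨u, hu, rfl⟩ := pal_word_of Y hinv hx
  obtain ⟨v, rfl⟩ := pal_exists_word Y hY hinv g
  have key := pal_of_word Y (v.reverse ++ u ++ v) (by simp [hu])
  have h1 : ((v.reverse ++ u ++ v).map Y).prod
      = (v.map Y).prod⁻¹ * ((u.map Y).prod * (v.map Y).prod) := by
    rw [List.map_append, List.map_append, List.prod_append, List.prod_append,
      pal_prod_reverse Y hinv, mul_assoc]
  rw [h1] at key
  simpa [mul_assoc] using key

lemma pal_gen (i : Fin n) : IsPalindrome Y (Y i) :=
  ⟨[(i, true)], rfl, by simp [evalWord]⟩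

lemma pal_one : IsPalindrome Y (1 : G) := ⟨[], rfl, rfl⟩

lemma pal_prod_two {a b c : G} (ha : IsPalindrome Y a) (hb : IsPalindrome Y b)
    (h : a * b = c) : IsPalProd Y 2 c := by
  refine ⟨![a, b], ?_, by simpa⟩
  intro i; fin_cases i <;> simpa

end Helpers

/-- For a group generated by a family of involutions `Y`:
(a) `[g, p]` is a product of 2 palindromes for every palindrome `p`;
(b) `[g, y] y^α` is a product of 2 palindromes for every generator `y` and `α ∈ {0, 1}`;
(c) `h⁻¹ [g, y] h` is a product of 2 palindromes for every generator `y`. -/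
theorem isPalProd_two_of_involutions {G : Type*} [Group G] {n : ℕ} (Y : Fin n → G)
    (hY : Subgroup.closure (Set.range Y) = ⊤) (hinv : ∀ i, Y i ^ 2 = 1) :
    (∀ g p : G, IsPalindrome Y p → IsPalProd Y 2 (pcomm g p)) ∧
      (∀ (g : G) (i : Fin n) (α : ℕ), α ∈ ({0, 1} : Set ℕ) →
        IsPalProd Y 2 (pcomm g (Y i) * Y i ^ α)) ∧
      (∀ (g h : G) (i : Fin n), IsPalProd Y 2 (h⁻¹ * pcomm g (Y i) * h)) := by
  have hii := pal_inv_self Y hinv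
  refine ⟨?_, ?_, ?_⟩
  · intro g p hp
    refine pal_prod_two Y (pal_conj Y hY hinv g hp) hp ?_
    rw [pcomm, pal_inv_eq Y hinv hp]
  · intro g i α hα
    rcases hα with rfl | rfl
    · refine pal_prod_two Y (pal_conj Y hY hinv g (pal_gen Y i)) (pal_gen Y i) ?_
      rw [pcomm, hii i]; group
    · refine pal_prod_two Y (pal_conj Y hY hinv g (pal_gen Y i)) (pal_one Y) ?_
      have h2 : Y i * Y i = 1 := by rw [← pow_two]; exact hinv i
      rw [pcomm, hii i, pow_one, mul_one, mul_assoc, mul_assoc, mul_assoc, h2, mul_one]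
  · intro g h i
    refine pal_prod_two Y (pal_conj Y hY hinv (g * h) (pal_gen Y i))
      (pal_conj Y hY hinv h (pal_gen Y i)) ?_
    rw [pcomm, hii i]; group
end
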